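/- Let T be a real tree and γ, δ hyperbolic isometries of T. Then max(l(γδ), l(γδ⁻¹)) ≥ l(γ) + l(δ), with equality of the maximum: max(l(γδ), l(γδ⁻¹)) = l(γ) + l(δ) if and only if the axes A_γ and A_δ intersect. -/
import Mathlib


/-- A real tree: a geodesic metric space which is 0-hyperbolic
(four-point condition), so that any two points are joined by a unique arc,
which is geodesic. -/
def IsRTree (T : Type*) [MetricSpace T] : Prop :=
  (∀ x y : T, ∃ f : ℝ → T, f 0 = x ∧ f (dist x y) = y ∧
    ∀ s ∈ Set.Icc (0 : ℝ) (dist x y), ∀ t ∈ Set.Icc (0 : ℝ) (dist x y),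
      dist (f s) (f t) = |s - t|) ∧
  (∀ x y z w : T, dist x y + dist z w ≤ max (dist x z + dist y w) (dist x w + dist y z))

/-- The translation length `l(γ) = inf_x d(x, γ x)` of an isometry. -/
noncomputable def transLen {T : Type*} [MetricSpace T] (γ : T ≃ᵢ T) : ℝ :=
  ⨅ x : T, dist x (γ x)

/-- The axis `A_γ = {x | d(x, γ x) = l(γ)}` of an isometry. -/
def axisSet {T : Type*} [MetricSpace T] (γ : T ≃ᵢ T) : Set T :=
  {x | dist x (γ x) = transLen γ}

/-- An isometry is hyperbolic if its translation length is attained and positive. -/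
def IsHyperbolicIso {T : Type*} [MetricSpace T] (γ : T ≃ᵢ T) : Prop :=
  0 < transLen γ ∧ (axisSet γ).Nonempty



set_option linter.unusedSectionVars false
set_option maxHeartbeats 1000000

namespace RTreeAux

variable {T : Type*} [MetricSpace T] [Nonempty T]

lemma transLen_nonneg (γ : T ≃ᵢ T) : 0 ≤ transLen γ :=
  le_ciInf fun _ => dist_nonneg

lemma transLen_le (γ : T ≃ᵢ T) (x : T) : transLen γ ≤ dist x (γ x) :=
  ciInf_le ⟨0, by rintro r ⟨y, rfl⟩; exact dist_nonneg⟩ x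

lemma transLen_symm (γ : T ≃ᵢ T) : transLen γ.symm = transLen γ := by
  have h : ∀ g : T ≃ᵢ T, transLen g ≤ transLen g.symm := by
    intro g
    refine le_ciInf fun x => ?_
    have h1 := transLen_le g (g.symm x)
    rwa [g.apply_symm_apply, dist_comm] at h1
  have h2 := h γ.symm
  rw [IsometryEquiv.symm_symm] at h2
  exact le_antisymm h2 (h γ)

lemma four_pt (hT : IsRTree T) (w x y z : T) :
    dist w x + dist w z - dist x z ≤ dist w x + dist w y - dist x y ∨
    dist w z + dist w y - dist z y ≤ dist w x + dist w y - dist x y := by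
  rcases le_max_iff.mp (hT.2 x y z w) with h | h
  · left; linarith [dist_comm y w, dist_comm z w]
  · right; linarith [dist_comm x w, dist_comm z w, dist_comm y z]

lemma trans0 (hT : IsRTree T) {p a b c : T}
    (h0 : dist p a + dist p b - dist a b = 0)
    (hpos : 0 < dist p a + dist p c - dist a c) :
    dist c b = dist p c + dist p b := by
  rcases four_pt hT p a b c with h | h
  · linarith
  · have ht := dist_triangle c p b
    linarith [dist_comm c p]

lemma lemB (hT : IsRTree T) {x p y z : T}
    (hbtw : dist x p + dist p y = dist x y)
    (hle : 2 * dist x p ≤ dist x y + dist x z - dist y z) :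
    dist x p + dist p z = dist x z := by
  rcases four_pt hT p x y z with h | h
  · have ht := dist_triangle x p z
    linarith [dist_comm x p]
  · have ht := dist_triangle x p z
    have ht2 := dist_triangle z p y
    linarith [dist_comm x p, dist_comm z p, dist_comm z y]

lemma btw_diff (hT : IsRTree T) {a x y b : T}
    (hx : dist a x + dist x b = dist a b)
    (hy : dist a y + dist y b = dist a b)
    (hxy : dist a x ≤ dist a y) :
    dist a x + dist x y = dist a y := by
  apply lemB hT hx
  linarith [dist_comm b y]

lemma btw_glue1 {a c u b : T} (h1 : dist a c + dist c b = dist a b)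
    (h2 : dist c u + dist u b = dist c b) : dist a u + dist u b = dist a b := by
  have t1 := dist_triangle a u b
  have t2 := dist_triangle a c u
  linarith

lemma btw_glue2 {a u c b : T} (h1 : dist a u + dist u c = dist a c)
    (h2 : dist a c + dist c b = dist a b) : dist a u + dist u b = dist a b := by
  have t1 := dist_triangle a u b
  have t2 := dist_triangle u c b
  linarith

lemma lemA (hT : IsRTree T) (g : T ≃ᵢ T) (x : T) :
    dist x (g (g x)) - dist x (g x) ≤ transLen g := by
  refine le_ciInf fun y => ?_
  have h := hT.2 x (g (g x)) (g x) (g y)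
  have e1 : dist (g x) (g y) = dist x y := g.dist_eq x y
  have e2 : dist (g (g x)) (g y) = dist (g x) y := g.dist_eq (g x) y
  have e3 : dist (g (g x)) (g x) = dist (g x) x := g.dist_eq (g x) x
  have t1 := dist_triangle (g x) (g y) y
  have t2 := dist_triangle x y (g y)
  rcases le_max_iff.mp h with h' | h' <;>
    linarith [dist_comm (g y) y, dist_comm (g x) x]

lemma lemC (hT : IsRTree T) (g : T ≃ᵢ T) {p : T}
    (hp : dist p (g p) = transLen g) : dist p (g (g p)) = 2 * transLen g := by
  set l := transLen g with hldef
  have hl0 : 0 ≤ l := transLen_nonneg g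
  have e1 : dist (g p) (g (g p)) = l := by rw [g.dist_eq p (g p)]; exact hp
  have hub : dist p (g (g p)) ≤ 2 * l := by
    have := dist_triangle p (g p) (g (g p)); linarith [hp]
  by_contra hne
  have hklt : dist p (g (g p)) < 2 * l := lt_of_le_of_ne hub hne
  set k := (2 * l - dist p (g (g p))) / 2 with hkdef
  have hk0 : 0 < k := by simp only [hkdef]; linarith
  have hkl : k ≤ l := by
    have := dist_nonneg (x := p) (y := g (g p)); simp only [hkdef]; linarith
  obtain ⟨f, hf0, hfd, hiso⟩ := hT.1 p (g p)
  rw [hp] at hfd hiso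
  have hmem1 : (0:ℝ) ∈ Set.Icc (0:ℝ) l := ⟨le_refl _, hl0⟩
  have hmem2 : l - k/2 ∈ Set.Icc (0:ℝ) l := ⟨by linarith, by linarith⟩
  have hmem3 : l ∈ Set.Icc (0:ℝ) l := ⟨hl0, le_refl _⟩
  set q := f (l - k/2) with hq
  have d1 : dist p q = l - k/2 := by
    have h := hiso 0 hmem1 (l - k/2) hmem2
    rw [hf0] at h
    rw [h, zero_sub, abs_neg, abs_of_nonneg (by linarith : (0:ℝ) ≤ l - k/2)]
  have d2 : dist q (g p) = k/2 := by
    have h := hiso (l - k/2) hmem2 l hmem3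
    rw [hfd] at h
    rw [h]
    rw [show l - k/2 - l = -(k/2) by ring, abs_neg, abs_of_nonneg (by linarith : (0:ℝ) ≤ k/2)]
  -- q between g p and g² p
  have hb1 : dist (g p) q + dist q p = dist (g p) p := by
    rw [dist_comm (g p) q, dist_comm (g p) p, dist_comm q p, d1, d2, hp]; ring
  have hstep : dist (g p) q + dist q (g (g p)) = dist (g p) (g (g p)) := by
    apply lemB hT hb1
    rw [dist_comm (g p) q, d2, dist_comm (g p) p, hp, e1]
    simp only [hkdef]; linarith
  have d3 : dist q (g (g p)) = l - k/2 := by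
    rw [e1] at hstep; rw [dist_comm (g p) q, d2] at hstep; linarith
  -- g q between g p and g² p
  have d4 : dist (g p) (g q) = l - k/2 := by rw [g.dist_eq p q]; exact d1
  have d5 : dist (g q) (g (g p)) = k/2 := by rw [g.dist_eq q (g p)]; exact d2
  have hb2 : dist (g p) (g q) + dist (g q) (g (g p)) = dist (g p) (g (g p)) := by
    rw [d4, d5, e1]; ring
  have hb3 : dist (g p) q + dist q (g (g p)) = dist (g p) (g (g p)) := hstep
  have hdiff := btw_diff hT hb3 hb2 (by rw [dist_comm (g p) q, d2, d4]; linarith)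
  -- dist (g p) q + dist q (g q) = dist (g p) (g q)
  have d6 : dist q (g q) = l - k := by
    rw [dist_comm (g p) q, d2, d4] at hdiff; linarith
  have := transLen_le g q
  rw [d6] at this
  simp only [← hldef] at this
  linarith

lemma axis_convex (hT : IsRTree T) (g : T ≃ᵢ T) {P Q u : T}
    (hP : dist P (g P) = transLen g) (hQ : dist Q (g Q) = transLen g)
    (hu : dist P u + dist u Q = dist P Q) : dist u (g u) = transLen g := by
  refine le_antisymm ?_ (transLen_le g u)
  have h := hT.2 u (g u) (g P) (g Q)
  have e1 : dist (g P) (g Q) = dist P Q := g.dist_eq P Q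
  have e2 : dist (g u) (g Q) = dist u Q := g.dist_eq u Q
  have e3 : dist (g u) (g P) = dist u P := g.dist_eq u P
  have t1 := dist_triangle u P (g P)
  have t2 := dist_triangle u Q (g Q)
  rcases le_max_iff.mp h with h' | h' <;>
    linarith [dist_comm u P, dist_comm u Q]

lemma dist_iter (g : T ≃ᵢ T) (x y : T) : ∀ n : ℕ,
    dist ((⇑g)^[n] x) ((⇑g)^[n] y) = dist x y := by
  intro n
  induction n with
  | zero => simp
  | succ n ih =>
    rw [Function.iterate_succ_apply', Function.iterate_succ_apply', g.dist_eq, ih]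

lemma iter_shift (g : T ≃ᵢ T) (c : T) (i m n : ℕ) :
    dist ((⇑g)^[i + m] c) ((⇑g)^[i + n] c) = dist ((⇑g)^[m] c) ((⇑g)^[n] c) := by
  rw [Function.iterate_add_apply, Function.iterate_add_apply, dist_iter]

lemma axis_iter (g : T ≃ᵢ T) {c : T} (hc : dist c (g c) = transLen g) (n : ℕ) :
    dist ((⇑g)^[n] c) (g ((⇑g)^[n] c)) = transLen g := by
  rw [← Function.iterate_succ_apply' g n c, Function.iterate_succ_apply g n c, dist_iter]
  exact hc

lemma line_dist (hT : IsRTree T) (g : T ≃ᵢ T) {c : T}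
    (hc : dist c (g c) = transLen g) (hpos : 0 < transLen g) :
    ∀ n : ℕ, dist c ((⇑g)^[n] c) = n * transLen g := by
  set l := transLen g with hldef
  have key : ∀ n : ℕ, dist c ((⇑g)^[n] c) = n * l ∧
      dist c ((⇑g)^[n+1] c) = ((n:ℝ)+1) * l := by
    intro n
    induction n with
    | zero =>
      constructor
      · simp
      · simpa using hc
    | succ n ih =>
      obtain ⟨ih1, ih2⟩ := ih
      refine ⟨by rw [ih2]; push_cast; ring, ?_⟩
      have hax : dist ((⇑g)^[n] c) (g ((⇑g)^[n] c)) = l := axis_iter g hc n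
      have hstep : dist ((⇑g)^[n] c) ((⇑g)^[n+2] c) = 2 * l := by
        have h2 := lemC hT g hax
        rw [← Function.iterate_succ_apply' g n c] at h2
        rw [← Function.iterate_succ_apply' g (n+1) c] at h2
        exact h2
      have h1 : dist ((⇑g)^[n+1] c) ((⇑g)^[n] c) = l := by
        rw [dist_comm, Function.iterate_succ_apply' g n c]
        exact hax
      have h2 : dist ((⇑g)^[n+1] c) ((⇑g)^[n+2] c) = l := by
        have := axis_iter g hc (n+1)
        rw [← Function.iterate_succ_apply' g (n+1) c] at this
        exact this
      have h0 : dist ((⇑g)^[n+1] c) ((⇑g)^[n] c) + dist ((⇑g)^[n+1] c) ((⇑g)^[n+2] c)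
          - dist ((⇑g)^[n] c) ((⇑g)^[n+2] c) = 0 := by
        rw [h1, h2, hstep]; ring
      have hpos2 : 0 < dist ((⇑g)^[n+1] c) ((⇑g)^[n] c) + dist ((⇑g)^[n+1] c) c
          - dist ((⇑g)^[n] c) c := by
        rw [h1, dist_comm _ c, dist_comm _ c, ih1, ih2]
        push_cast; nlinarith
      have := trans0 hT h0 hpos2
      -- dist c ((g)^[n+2] c) = dist _ c + dist _ (n+2)
      rw [dist_comm _ c] at this
      rw [this, ih2, h2]
      push_cast; ring
  exact fun n => (key n).1

lemma proj_lemma (hT : IsRTree T) (g : T ≃ᵢ T) (hpos : 0 < transLen g)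
    {q₀ : T} (hq₀ : dist q₀ (g q₀) = transLen g) (z : T) :
    ∃ q : T, dist q (g q) = transLen g ∧
      dist z (g q) = dist z q + transLen g ∧
      dist z (g.symm q) = dist z q + transLen g ∧
      dist z q₀ = dist z q + dist q q₀ := by
  set l := transLen g with hldef
  obtain ⟨N, hN⟩ := exists_nat_ge ((dist z q₀ + l) / l)
  have hNl : dist z q₀ + l ≤ N * l := by
    rw [div_le_iff₀ hpos] at hN; linarith
  set c : T := (⇑g.symm)^[N+1] q₀ with hc
  -- c is on the axis
  have hcax' : ∀ n : ℕ, dist ((⇑g.symm)^[n] q₀) (g ((⇑g.symm)^[n] q₀)) = l := by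
    intro n
    induction n with
    | zero => simpa using hq₀
    | succ n ih =>
      rw [Function.iterate_succ_apply', g.apply_symm_apply]
      have h := g.dist_eq (g.symm ((⇑g.symm)^[n] q₀)) ((⇑g.symm)^[n] q₀)
      rw [g.apply_symm_apply] at h
      rw [← h]
      exact ih
  have hcax : dist c (g c) = l := hcax' (N+1)
  set e : ℕ → T := fun j => (⇑g)^[j] c with he
  have heq₀ : e (N+1) = q₀ :=
    Function.LeftInverse.iterate g.apply_symm_apply (N+1) q₀
  have hsucc : ∀ j : ℕ, g (e j) = e (j+1) := fun j =>
    (Function.iterate_succ_apply' (⇑g) j c).symm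
  have hline : ∀ j : ℕ, dist c (e j) = j * l := line_dist hT g hcax hpos
  have hdist : ∀ i k : ℕ, dist (e i) (e (i + k)) = k * l := by
    intro i k
    have h := iter_shift g c i 0 k
    simp only [Nat.add_zero] at h
    have : e i = (⇑g)^[i + 0] c := by simp [he]
    calc dist (e i) (e (i+k)) = dist ((⇑g)^[i+0] c) ((⇑g)^[i+k] c) := by rw [Nat.add_zero]
    _ = dist ((⇑g)^[0] c) ((⇑g)^[k] c) := iter_shift g c i 0 k
    _ = dist c (e k) := by simp [he]
    _ = k * l := hline k
  have hd : ∀ i j : ℕ, i ≤ j → dist (e i) (e j) = (j : ℝ) * l - (i : ℝ) * l := by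
    intro i j hij
    obtain ⟨k, rfl⟩ := Nat.exists_eq_add_of_le hij
    rw [hdist i k]; push_cast; ring
  -- the segment from a to b
  set a := e 1 with ha
  set b := e (2*N+1) with hb
  have hab : dist a b = 2*(N:ℝ)*l := by
    rw [hd 1 (2*N+1) (by omega)]; push_cast; ring
  obtain ⟨f, hf0, hfd, hiso⟩ := hT.1 a b
  set t := (dist a z + dist a b - dist z b) / 2 with ht
  have ht0 : 0 ≤ t := by
    have h1 := dist_triangle z a b
    rw [ht]; linarith [dist_comm a z]
  have htab : t ≤ dist a b := by
    have h1 := dist_triangle a b z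
    rw [ht]; linarith [dist_comm b z]
  set q := f t with hq
  have hqa : dist a q = t := by
    have h := hiso 0 ⟨le_refl _, dist_nonneg⟩ t ⟨ht0, htab⟩
    rw [hf0] at h
    rw [hq, h, zero_sub, abs_neg, abs_of_nonneg ht0]
  have hqb : dist q b = dist a b - t := by
    have h := hiso t ⟨ht0, htab⟩ (dist a b) ⟨dist_nonneg, le_refl _⟩
    rw [hfd] at h
    rw [hq, h, abs_of_nonpos (by linarith), neg_sub]
  have hbtwq : dist a q + dist q b = dist a b := by rw [hqa, hqb]; ring
  -- the gate property
  have gate : ∀ u : T, dist a u + dist u b = dist a b → dist z u = dist z q + dist q u := by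
    intro u hu
    rcases le_or_gt (dist a u) t with hcase | hcase
    · have h1 : dist a u + dist u z = dist a z := by
        apply lemB hT hu
        linarith [dist_comm z b, ht, hcase]
      have h2 : dist a q + dist q z = dist a z := by
        apply lemB hT hbtwq
        linarith [dist_comm z b, ht, hqa]
      have h3 : dist a u + dist u q = dist a q := btw_diff hT hu hbtwq (by rw [hqa]; exact hcase)
      rw [hqa] at h2 h3
      linarith [dist_comm u z, dist_comm q z, dist_comm u q]
    · have hbu : dist b u + dist u a = dist b a := by
        linarith [dist_comm a u, dist_comm u b, dist_comm a b]
      have hbq : dist b q + dist q a = dist b a := by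
        linarith [dist_comm a q, dist_comm q b, dist_comm a b]
      have h1 : dist b u + dist u z = dist b z := by
        apply lemB hT hbu
        have hthis : dist b u = dist a b - dist a u := by
          linarith [dist_comm u b]
        linarith [hthis, ht, hcase, dist_comm a b, dist_comm z b]
      have h2 : dist b q + dist q z = dist b z := by
        apply lemB hT hbq
        have hthis : dist b q = dist a b - t := by rw [dist_comm]; exact hqb
        linarith [hthis, ht, dist_comm a b, dist_comm z b]
      have h3 : dist b u + dist u q = dist b q := by
        apply btw_diff hT hbu hbq
        have e1 : dist b u = dist a b - dist a u := by linarith [dist_comm u b]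
        have e2 : dist b q = dist a b - t := by rw [dist_comm]; exact hqb
        rw [e1, e2]; linarith
      linarith [dist_comm u z, dist_comm q z, dist_comm u q]
  -- q is on the axis
  have haax : dist a (g a) = l := by rw [ha, axis_iter g hcax 1]
  have hbax : dist b (g b) = l := by rw [hb, axis_iter g hcax (2*N+1)]
  have hqax : dist q (g q) = l := axis_convex hT g haax hbax hbtwq
  -- gate at q₀
  have hq₀btw : dist a q₀ + dist q₀ b = dist a b := by
    rw [← heq₀, hd 1 (N+1) (by omega), hd (N+1) (2*N+1) (by omega), hd 1 (2*N+1) (by omega)]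
    push_cast; ring
  have hzq₀ : dist z q₀ = dist z q + dist q q₀ := gate q₀ hq₀btw
  have hDq : dist q q₀ ≤ dist z q₀ := by linarith [dist_nonneg (x := z) (y := q)]
  -- bounds on t
  have haq₀ : dist a q₀ = (N:ℝ) * l := by
    rw [← heq₀, hd 1 (N+1) (by omega)]; push_cast; ring
  have htlow : l ≤ t := by
    have h2 := dist_triangle a q q₀
    linarith [haq₀, hqa, hDq, hNl]
  have hthigh : t + l ≤ 2*(N:ℝ)*l := by
    have h := dist_triangle a q₀ q
    linarith [haq₀, hqa, hDq, hNl, dist_comm q₀ q]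
  -- g q lies between a and b
  have himg : dist (e 2) (g q) + dist (g q) (e (2*N+2)) = dist (e 2) (e (2*N+2)) := by
    have e1 : dist (e 2) (g q) = dist a q := by
      rw [← hsucc 1, g.dist_eq]
    have e2 : dist (g q) (e (2*N+2)) = dist q b := by
      rw [← hsucc (2*N+1), g.dist_eq]
    have e3 : dist (e 2) (e (2*N+2)) = dist a b := by
      rw [hd 2 (2*N+2) (by omega), hab]; push_cast; ring
    rw [e1, e2, e3]; exact hbtwq
  have hstep1 : dist a (g q) + dist (g q) (e (2*N+2)) = dist a (e (2*N+2)) :=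
    btw_glue1 (by rw [ha, hd 1 2 (by omega), hd 2 (2*N+2) (by omega), hd 1 (2*N+2) (by omega)]; push_cast; ring) himg
  have hagq : dist a (g q) = t + l := by
    have e1 : dist a (e (2*N+2)) = (2*(N:ℝ)+1) * l := by
      rw [hd 1 (2*N+2) (by omega)]; push_cast; ring
    have e2 : dist (g q) (e (2*N+2)) = dist a b - t := by
      rw [← hsucc (2*N+1), g.dist_eq]; exact hqb
    rw [e1, e2, hab] at hstep1; linarith
  have hgqbtw : dist a (g q) + dist (g q) b = dist a b := by
    have hbB : dist a b + dist b (e (2*N+2)) = dist a (e (2*N+2)) := by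
      rw [hab, hd (2*N+1) (2*N+2) (by omega), hd 1 (2*N+2) (by omega)]; push_cast; ring
    have := btw_diff hT hstep1 hbB (by rw [hagq, hab]; linarith)
    -- dist a (g q) + dist (g q) b = dist a b
    rw [hagq] at this ⊢
    rw [hab] at this ⊢
    linarith
  have hzgq : dist z (g q) = dist z q + l := by
    rw [gate (g q) hgqbtw, hqax]
  -- g.symm q lies between a and b
  have hsymm_e : ∀ j : ℕ, g.symm (e (j+1)) = e j := by
    intro j; rw [← hsucc j, g.symm_apply_apply]
  have himg2 : dist (e 0) (g.symm q) + dist (g.symm q) (e (2*N)) = dist (e 0) (e (2*N)) := by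
    have e1 : dist (e 0) (g.symm q) = dist a q := by
      rw [← hsymm_e 0, g.symm.dist_eq]
    have e2 : dist (g.symm q) (e (2*N)) = dist q b := by
      rw [← hsymm_e (2*N), g.symm.dist_eq]
    have e3 : dist (e 0) (e (2*N)) = dist a b := by
      rw [hd 0 (2*N) (by omega), hab]; push_cast; ring
    rw [e1, e2, e3]; exact hbtwq
  have hstep2 : dist (e 0) (g.symm q) + dist (g.symm q) b = dist (e 0) b :=
    btw_glue2 himg2 (by rw [hb, hd 0 (2*N) (by omega), hd (2*N) (2*N+1) (by omega), hd 0 (2*N+1) (by omega)]; push_cast; ring)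
  have he0gsq : dist (e 0) (g.symm q) = t := by
    rw [← hsymm_e 0, g.symm.dist_eq]; exact hqa
  have h01 : dist (e 0) a + dist a (g.symm q) = dist (e 0) (g.symm q) := by
    apply btw_diff hT (b := b)
    · rw [ha, hd 0 1 (by omega), hd 1 (2*N+1) (by omega), hd 0 (2*N+1) (by omega)]; push_cast; ring
    · exact hstep2
    · rw [he0gsq, ha, hd 0 1 (by omega)]; push_cast; linarith
  have hagsq : dist a (g.symm q) = t - l := by
    have e1 : dist (e 0) a = l := by rw [ha, hd 0 1 (by omega)]; push_cast; ring
    rw [e1, he0gsq] at h01; linarith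
  have hgsqbtw : dist a (g.symm q) + dist (g.symm q) b = dist a b := by
    have e1 : dist (g.symm q) b = dist (e 0) b - t := by
      linarith [hstep2, he0gsq]
    have e2 : dist (e 0) b = (2*(N:ℝ)+1) * l := by
      rw [hb, hd 0 (2*N+1) (by omega)]; push_cast; ring
    rw [hagsq, e1, e2, hab]; ring
  have hzgsq : dist z (g.symm q) = dist z q + l := by
    rw [gate (g.symm q) hgsqbtw]
    have : dist q (g.symm q) = l := by
      have h := g.dist_eq q (g.symm q)
      rw [g.apply_symm_apply] at h
      rw [← h, dist_comm]; exact hqax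
    rw [this]
  exact ⟨q, hqax, hzgq, hzgsq, hzq₀⟩

lemma intersect_lower (hT : IsRTree T) (γ δ : T ≃ᵢ T)
    (hlγ : 0 < transLen γ) (hlδ : 0 < transLen δ) {p : T}
    (hpγ : dist p (γ p) = transLen γ) (hpδ : dist p (δ p) = transLen δ)
    (h1 : dist (γ.symm p) (δ p) = transLen γ + transLen δ)
    (h2 : dist (γ p) (δ.symm p) = transLen γ + transLen δ) :
    transLen γ + transLen δ ≤ transLen (δ.trans γ) := by
  set l := transLen γ with hl
  set l' := transLen δ with hl'
  have f1 : dist p (γ.symm p) = l := by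
    have h := γ.dist_eq (γ.symm p) p
    rw [γ.apply_symm_apply] at h
    rw [dist_comm, ← h]; exact hpγ
  have f2 : dist p (δ.symm p) = l' := by
    have h := δ.dist_eq (δ.symm p) p
    rw [δ.apply_symm_apply] at h
    rw [dist_comm, ← h]; exact hpδ
  have f3 : dist p (γ (δ p)) = l + l' := by
    have h := γ.dist_eq (γ.symm p) (δ p)
    rw [γ.apply_symm_apply] at h
    rw [h]; exact h1
  have f4 : dist p (δ.symm (γ.symm p)) = l + l' := by
    have h := δ.dist_eq (δ.symm (γ.symm p)) p
    rw [δ.apply_symm_apply] at h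
    rw [dist_comm, ← h]; exact h1
  have f5 : dist (δ.symm (γ.symm p)) (δ.symm p) = l := by
    have h := δ.symm.dist_eq (γ.symm p) p
    rw [h, dist_comm]; exact f1
  have f6 : dist (γ (δ p)) (γ p) = l' := by
    have h := γ.dist_eq (δ p) p
    rw [h, dist_comm]; exact hpδ
  -- step A : (A | γ p)_p ≤ 0 where A := δ.symm (γ.symm p)
  have zA : dist p (δ.symm (γ.symm p)) + dist p (γ p) - dist (δ.symm (γ.symm p)) (γ p) ≤ 0 := by
    rcases four_pt hT p (δ.symm p) (γ p) (δ.symm (γ.symm p)) with h | h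
    · exfalso
      rw [f2, f4, hpγ] at h
      rw [dist_comm (δ.symm p) (δ.symm (γ.symm p))] at h
      rw [f5] at h
      rw [dist_comm (δ.symm p) (γ p)] at h
      rw [h2] at h
      linarith
    · rw [f2, hpγ] at h
      rw [dist_comm (δ.symm p) (γ p), h2] at h
      linarith [dist_comm (δ.symm (γ.symm p)) (γ p), f4, hpγ]
  -- step B : dist A B = 2(l+l') where B := γ (δ p)
  have hAB : dist (δ.symm (γ.symm p)) (γ (δ p)) = 2 * (l + l') := by
    rcases four_pt hT p (δ.symm (γ.symm p)) (γ p) (γ (δ p)) with h | h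
    · have htr := dist_triangle (δ.symm (γ.symm p)) p (γ (δ p))
      linarith [h, zA, htr, dist_comm (δ.symm (γ.symm p)) p, f4, f3]
    · exfalso
      rw [f3, hpγ, f6] at h
      linarith [zA]
  -- transfer via the isometry δ.trans γ
  have f7 : dist p (γ (δ (γ (δ p)))) = 2 * (l + l') := by
    have h := (δ.trans γ).dist_eq (δ.symm (γ.symm p)) (γ (δ p))
    simp only [IsometryEquiv.trans_apply, IsometryEquiv.apply_symm_apply] at h
    rw [h]; exact hAB
  have hA := lemA hT (δ.trans γ) p
  simp only [IsometryEquiv.trans_apply] at hA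
  rw [f7, f3] at hA
  linarith

lemma bridge_lower (hT : IsRTree T) (γ δ : T ≃ᵢ T)
    (hlγ : 0 < transLen γ) (hlδ : 0 < transLen δ) {p q : T}
    (hΔ : 0 < dist p q)
    (hpγ : dist p (γ p) = transLen γ) (hqδ : dist q (δ q) = transLen δ)
    (hg1 : dist q (γ p) = dist q p + transLen γ)
    (hg2 : dist q (γ.symm p) = dist q p + transLen γ)
    (hd1 : dist p (δ q) = dist p q + transLen δ)
    (hd2 : dist p (δ.symm q) = dist p q + transLen δ) :
    transLen γ + transLen δ + 2 * dist p q ≤ transLen (δ.trans γ) := by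
  set l := transLen γ with hl
  set l' := transLen δ with hl'
  set Δ := dist p q with hΔdef
  have fp1 : dist p (γ.symm p) = l := by
    have h := γ.dist_eq (γ.symm p) p
    rw [γ.apply_symm_apply] at h
    rw [dist_comm, ← h]; exact hpγ
  have fq1 : dist q (δ.symm q) = l' := by
    have h := δ.dist_eq (δ.symm q) q
    rw [δ.apply_symm_apply] at h
    rw [dist_comm, ← h]; exact hqδ
  -- (ii) dist (δ q) (γ.symm p) = Δ + l' + l
  have w2 : dist (δ q) (γ.symm p) = Δ + l' + l := by
    have h := trans0 hT (p := p) (a := q) (b := γ.symm p) (c := δ q)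
      (by rw [fp1, hg2, dist_comm q p]; try ring)
      (by rw [hd1, hqδ]; try linarith [hΔ])
    rw [h, fp1, hd1]; try ring
  have fpq' : dist (γ.symm p) (γ.symm q) = Δ := γ.symm.dist_eq p q
  have fgsq : dist p (γ.symm q) = Δ + l := by
    have h := γ.symm.dist_eq q (γ p)
    rw [γ.symm_apply_apply] at h
    rw [dist_comm, h, hg1, dist_comm q p]
  -- (iii) dist (δ q) (γ.symm q) = l + l' + 2Δ
  have w3 : dist (δ q) (γ.symm q) = l + l' + 2 * Δ := by
    have h := trans0 hT (p := γ.symm p) (a := p) (b := γ.symm q) (c := δ q)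
      (by rw [dist_comm (γ.symm p) p, fp1, fpq', fgsq]; try ring)
      (by rw [dist_comm (γ.symm p) p, fp1, dist_comm (γ.symm p) (δ q), w2, hd1]; try linarith)
    rw [h, dist_comm (γ.symm p) (δ q), w2, fpq']; try ring
  have hqgq : dist q (γ (δ q)) = l + l' + 2 * Δ := by
    have h := γ.dist_eq (γ.symm q) (δ q)
    rw [γ.apply_symm_apply] at h
    rw [h, dist_comm]; exact w3
  -- (iv) dist (γ.symm q) q = l + 2Δ
  have w4 : dist (γ.symm q) q = l + 2 * Δ := by
    have h := trans0 hT (p := p) (a := γ.symm p) (b := q) (c := γ.symm q)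
      (by rw [fp1, dist_comm (γ.symm p) q, hg2, dist_comm q p]; try ring)
      (by rw [fp1, fgsq, fpq']; try linarith)
    rw [h, fgsq]; try ring
  -- (v) the two key products at q
  have dqgi : dist q (δ.symm (γ.symm q)) = l + l' + 2 * Δ := by
    have h := (δ.trans γ).dist_eq (δ.symm (γ.symm q)) q
    simp only [IsometryEquiv.trans_apply, IsometryEquiv.apply_symm_apply] at h
    rw [dist_comm, ← h]; exact hqgq
  have dd : dist (δ.symm (γ.symm q)) (δ.symm q) = l + 2 * Δ := by
    have h := δ.symm.dist_eq (γ.symm q) q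
    rw [h]; exact w4
  have dgqp : dist (γ (δ q)) p = l + l' + Δ := by
    have h := γ.dist_eq (δ q) (γ.symm p)
    rw [γ.apply_symm_apply] at h
    rw [h, w2]; try ring
  have step1 : dist (δ.symm (γ.symm q)) p = (l + l' + 2 * Δ) + Δ := by
    have h := trans0 hT (p := q) (a := δ.symm q) (b := p) (c := δ.symm (γ.symm q))
      (by rw [fq1, dist_comm (δ.symm q) p, hd2, dist_comm q p]; try ring)
      (by rw [fq1, dqgi, dist_comm (δ.symm q) (δ.symm (γ.symm q)), dd]; try linarith)
    rw [h, dqgi, dist_comm q p]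
  have step2 : dist (γ (δ q)) (δ.symm (γ.symm q)) = 2 * (l + l' + 2 * Δ) := by
    have h := trans0 hT (p := q) (a := p) (b := δ.symm (γ.symm q)) (c := γ (δ q))
      (by rw [dist_comm q p, dqgi, dist_comm p (δ.symm (γ.symm q)), step1]; try ring)
      (by rw [dist_comm q p, hqgq, dist_comm p (γ (δ q)), dgqp]; try linarith)
    rw [h, hqgq, dqgi]; try ring
  have final : dist q (γ (δ (γ (δ q)))) = 2 * (l + l' + 2 * Δ) := by
    have h := (δ.trans γ).dist_eq (δ.symm (γ.symm q)) (γ (δ q))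
    simp only [IsometryEquiv.trans_apply, IsometryEquiv.apply_symm_apply] at h
    rw [h, dist_comm]; exact step2
  have hA := lemA hT (δ.trans γ) q
  simp only [IsometryEquiv.trans_apply] at hA
  rw [final, hqgq] at hA
  linarith

end RTreeAux

open RTreeAux

/-- For hyperbolic isometries `γ, δ` of a real tree,
`max(l(γδ), l(γδ⁻¹)) ≥ l(γ) + l(δ)`, with equality if and only if the axes
`A_γ` and `A_δ` intersect.  (Here `γδ` acts by `x ↦ γ (δ x)`.) -/
theorem rtree_max_transLen_ge {T : Type*} [MetricSpace T] [Nonempty T]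
    (hT : IsRTree T) (γ δ : T ≃ᵢ T)
    (hγ : IsHyperbolicIso γ) (hδ : IsHyperbolicIso δ) :
    transLen γ + transLen δ ≤ max (transLen (δ.trans γ)) (transLen (δ.symm.trans γ)) ∧
      (max (transLen (δ.trans γ)) (transLen (δ.symm.trans γ)) = transLen γ + transLen δ ↔
        (axisSet γ ∩ axisSet δ).Nonempty) := by
  obtain ⟨hlγ, p₁, hp₁⟩ := hγ
  obtain ⟨hlδ, q₀, hq₀⟩ := hδ
  have hp₁' : dist p₁ (γ p₁) = transLen γ := hp₁
  have hq₀' : dist q₀ (δ q₀) = transLen δ := hq₀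
  by_cases hint : (axisSet γ ∩ axisSet δ).Nonempty
  · -- intersecting axes
    obtain ⟨p, hpγ, hpδ⟩ := hint
    have hpγ' : dist p (γ p) = transLen γ := hpγ
    have hpδ' : dist p (δ p) = transLen δ := hpδ
    set l := transLen γ with hl
    set l' := transLen δ with hl'
    -- upper bounds
    have ub1 : transLen (δ.trans γ) ≤ l + l' := by
      refine le_trans (transLen_le (δ.trans γ) p) ?_
      have ht := dist_triangle p (γ p) (γ (δ p))
      have he : dist (γ p) (γ (δ p)) = dist p (δ p) := γ.dist_eq p (δ p)
      simp only [IsometryEquiv.trans_apply]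
      rw [← hpγ', ← hpδ', ← he]
      exact ht
    have ub2 : transLen (δ.symm.trans γ) ≤ l + l' := by
      refine le_trans (transLen_le (δ.symm.trans γ) p) ?_
      have ht := dist_triangle p (γ p) (γ (δ.symm p))
      have he : dist (γ p) (γ (δ.symm p)) = dist p (δ.symm p) := γ.dist_eq p (δ.symm p)
      have he2 : dist p (δ.symm p) = l' := by
        have h := δ.dist_eq (δ.symm p) p
        rw [δ.apply_symm_apply] at h
        rw [dist_comm, ← h]; exact hpδ'
      simp only [IsometryEquiv.trans_apply]
      rw [← hpγ']
      rw [he, he2] at ht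
      linarith [hpγ']
    -- basic distances at p
    have fγ : dist p (γ.symm p) = l := by
      have h := γ.dist_eq (γ.symm p) p
      rw [γ.apply_symm_apply] at h
      rw [dist_comm, ← h]; exact hpγ'
    have fδ : dist p (δ.symm p) = l' := by
      have h := δ.dist_eq (δ.symm p) p
      rw [δ.apply_symm_apply] at h
      rw [dist_comm, ← h]; exact hpδ'
    have hγ2 : dist (γ.symm p) (γ p) = 2 * l := by
      have h := γ.dist_eq (γ.symm p) (γ p)
      rw [γ.apply_symm_apply] at h
      rw [← h]; exact lemC hT γ hpγ'
    have hδ2 : dist (δ.symm p) (δ p) = 2 * l' := by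
      have h := δ.dist_eq (δ.symm p) (δ p)
      rw [δ.apply_symm_apply] at h
      rw [← h]; exact lemC hT δ hpδ'
    -- the four Gromov products at p
    set a1 := dist p (γ.symm p) + dist p (δ p) - dist (γ.symm p) (δ p) with ha1
    set a2 := dist p (γ.symm p) + dist p (δ.symm p) - dist (γ.symm p) (δ.symm p) with ha2
    set b1 := dist p (γ p) + dist p (δ.symm p) - dist (γ p) (δ.symm p) with hb1
    set b2 := dist p (γ p) + dist p (δ p) - dist (γ p) (δ p) with hb2
    have a1n : 0 ≤ a1 := by have := dist_triangle (γ.symm p) p (δ p); rw [ha1]; linarith [dist_comm (γ.symm p) p]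
    have a2n : 0 ≤ a2 := by have := dist_triangle (γ.symm p) p (δ.symm p); rw [ha2]; linarith [dist_comm (γ.symm p) p]
    have b1n : 0 ≤ b1 := by have := dist_triangle (γ p) p (δ.symm p); rw [hb1]; linarith [dist_comm (γ p) p]
    have b2n : 0 ≤ b2 := by have := dist_triangle (γ p) p (δ p); rw [hb2]; linarith [dist_comm (γ p) p]
    have m1 : a1 ≤ 0 ∨ a2 ≤ 0 := by
      rcases four_pt hT p (δ p) (δ.symm p) (γ.symm p) with h | h
      · left
        rw [fδ, hpδ'] at h
        rw [dist_comm (δ p) (δ.symm p), hδ2] at h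
        rw [ha1]
        linarith [dist_comm (δ p) (γ.symm p), fδ, hpδ']
      · right
        rw [fδ, hpδ'] at h
        rw [dist_comm (δ p) (δ.symm p), hδ2] at h
        rw [ha2]
        linarith [dist_comm (γ.symm p) (δ.symm p)]
    have m2 : b2 ≤ 0 ∨ b1 ≤ 0 := by
      rcases four_pt hT p (δ p) (δ.symm p) (γ p) with h | h
      · left
        rw [fδ, hpδ'] at h
        rw [dist_comm (δ p) (δ.symm p), hδ2] at h
        rw [hb2]
        linarith [dist_comm (δ p) (γ p)]
      · right
        rw [fδ, hpδ'] at h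
        rw [dist_comm (δ p) (δ.symm p), hδ2] at h
        rw [hb1]
        linarith [dist_comm (γ p) (δ.symm p)]
    have m3 : a1 ≤ 0 ∨ b2 ≤ 0 := by
      rcases four_pt hT p (γ.symm p) (γ p) (δ p) with h | h
      · left
        rw [fγ, hpγ', hγ2] at h
        rw [ha1]
        linarith [dist_comm (γ.symm p) (δ p)]
      · right
        rw [fγ, hpγ', hγ2] at h
        rw [hb2]
        linarith [dist_comm (δ p) (γ p)]
    have m4 : a2 ≤ 0 ∨ b1 ≤ 0 := by
      rcases four_pt hT p (γ.symm p) (γ p) (δ.symm p) with h | h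
      · left
        rw [fγ, hpγ', hγ2] at h
        rw [ha2]
        linarith [dist_comm (γ.symm p) (δ.symm p)]
      · right
        rw [fγ, hpγ', hγ2] at h
        rw [hb1]
        linarith [dist_comm (δ.symm p) (γ p)]
    -- choice of sign
    have hchoice : (a1 = 0 ∧ b1 = 0) ∨ (a2 = 0 ∧ b2 = 0) := by
      rcases m3 with h3 | h3
      · rcases m4 with h4 | h4
        · rcases m2 with h2 | h2
          · right; constructor <;> linarith
          · left; constructor <;> linarith
        · left; constructor <;> linarith
      · rcases m4 with h4 | h4
        · right; constructor <;> linarith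
        · rcases m1 with h1 | h1
          · left; constructor <;> linarith
          · right; constructor <;> linarith
    have hlow : l + l' ≤ transLen (δ.trans γ) ∨ l + l' ≤ transLen (δ.symm.trans γ) := by
      rcases hchoice with ⟨e1, e2⟩ | ⟨e1, e2⟩
      · left
        apply intersect_lower hT γ δ hlγ hlδ hpγ' hpδ'
        · rw [ha1] at e1; rw [← hl, ← hl']; linarith [fγ, hpδ']
        · rw [hb1] at e2; rw [← hl, ← hl']; linarith [hpγ', fδ]
      · right
        have key := intersect_lower hT γ δ.symm hlγ (by rw [transLen_symm]; exact hlδ)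
          hpγ' (by rw [transLen_symm]; exact fδ)
          (by rw [transLen_symm, ← hl, ← hl']; rw [ha2] at e1; linarith [fγ, fδ])
          (by rw [IsometryEquiv.symm_symm, transLen_symm, ← hl, ← hl']
              rw [hb2] at e2; linarith [hpγ', hpδ'])
        rw [transLen_symm] at key
        exact key
    have part1 : l + l' ≤ max (transLen (δ.trans γ)) (transLen (δ.symm.trans γ)) := by
      rcases hlow with h | h
      · exact le_trans h (le_max_left _ _)
      · exact le_trans h (le_max_right _ _)
    exact ⟨part1, ⟨fun _ => ⟨p, hpγ, hpδ⟩, fun _ => le_antisymm (max_le ub1 ub2) part1⟩⟩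
  · -- disjoint axes
    obtain ⟨q, hqδ, hzdq, hzdsq, hzq₀⟩ := proj_lemma hT δ hlδ hq₀' p₁
    obtain ⟨p, hpγ, hqgp, hqgsp, hqp₁⟩ := proj_lemma hT γ hlγ hp₁' q
    have hΔpos : 0 < dist p q := by
      rcases lt_or_eq_of_le (dist_nonneg (x := p) (y := q)) with h | h
      · exact h
      · exfalso
        have : p = q := by rw [dist_eq_zero.mp h.symm]
        exact hint ⟨p, hpγ, by rw [this]; exact hqδ⟩
    -- transfer the gate property on the δ side from p₁ to p
    have hd1 : dist p (δ q) = dist p q + transLen δ := by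
      have ht1 := dist_triangle p q (δ q)
      have ht2 := dist_triangle p₁ p (δ q)
      have hq1 : dist q (δ q) = transLen δ := hqδ
      -- dist p₁ (δ q) = dist p₁ q + transLen δ, dist q p₁ = dist q p + dist p p₁
      linarith [hzdq, hqp₁, dist_comm q p₁, dist_comm p₁ p, dist_comm q p, hq1]
    have hd2 : dist p (δ.symm q) = dist p q + transLen δ := by
      have ht1 := dist_triangle p q (δ.symm q)
      have ht2 := dist_triangle p₁ p (δ.symm q)
      have hq1 : dist q (δ.symm q) = transLen δ := by
        have h := δ.dist_eq (δ.symm q) q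
        rw [δ.apply_symm_apply] at h
        rw [dist_comm, ← h]; exact hqδ
      linarith [hzdsq, hqp₁, dist_comm q p₁, dist_comm p₁ p, dist_comm q p, hq1]
    have lb1 := bridge_lower hT γ δ hlγ hlδ hΔpos hpγ hqδ hqgp hqgsp hd1 hd2
    have lb2 : transLen γ + transLen δ + 2 * dist p q ≤ transLen (δ.symm.trans γ) := by
      have key := bridge_lower hT γ δ.symm hlγ (by rw [transLen_symm]; exact hlδ) hΔpos hpγ
        (by rw [transLen_symm]
            have h := δ.dist_eq (δ.symm q) q
            rw [δ.apply_symm_apply] at h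
            rw [dist_comm, ← h]; exact hqδ)
        hqgp
        hqgsp
        (by rw [transLen_symm]; exact hd2)
        (by rw [IsometryEquiv.symm_symm, transLen_symm]; exact hd1)
      rw [transLen_symm] at key
      exact key
    constructor
    · refine le_trans ?_ (le_trans lb1 (le_max_left _ _))
      linarith
    constructor
    · intro hmax
      exfalso
      have h1 : transLen (δ.trans γ) ≤ transLen γ + transLen δ := by
        rw [← hmax]; exact le_max_left _ _
      linarith
    · intro h; exact absurd h hint
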